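/- In the setting of the previous local-to-global lemma, suppose additionally that $\hat{\mathbf{w}}^k$ also satisfies Chen's identity and the same local bounds $|\hat{\mathbf{w}}^k_{s,t}| \le \omega(s,t)^{k/p}$ on each subinterval, and that $|\mathbf{w}^k_{s,t} - \hat{\mathbf{w}}^k_{s,t}| \le \varepsilon\, \omega(s,t)^{k/p}$ for $\tau_{j-1} \le s \le t \le \tau_j$, all $j$ and $1 \le k \le \lfloor p \rfloor$, for some $\varepsilon \ge 0$. Then $|\mathbf{w}^k_{s,t} - \hat{\mathbf{w}}^k_{s,t}| \le \varepsilon\, N^{k(p-1)/p} \omega(s,t)^{k/p}$ for all $0 \le s \le t \le 1$ and $1 \le k \le \lfloor p \rfloor$. -/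

import Mathlib

open Finset

private lemma jensen2' {p m x y : ℝ} (hp : 1 ≤ p) (hm : 1 ≤ m) (hx : 0 ≤ x) (hy : 0 ≤ y) :
    m ^ (1 - 1/p) * x ^ (1/p) + y ^ (1/p) ≤ (m+1) ^ (1 - 1/p) * (x+y) ^ (1/p) := by
  have hp0 : (0:ℝ) < p := lt_of_lt_of_le one_pos hp
  have hm0 : (0:ℝ) < m := lt_of_lt_of_le one_pos hm
  have hm1 : (0:ℝ) < m + 1 := by linarith
  have key := Real.arith_mean_le_rpow_mean (Finset.univ : Finset (Fin 2))
      ![m/(m+1), 1/(m+1)] ![(x/m) ^ (1/p:ℝ), y ^ (1/p:ℝ)]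
      (by intro i _; fin_cases i <;> simp <;> positivity)
      (by simp [Fin.sum_univ_two]; field_simp)
      (by intro i _; fin_cases i <;> simp <;> positivity) hp
  simp only [Fin.sum_univ_two, Matrix.cons_val_zero, Matrix.cons_val_one, Matrix.head_cons] at key
  have e1 : ((x/m) ^ (1/p:ℝ)) ^ p = x/m := by
    rw [← Real.rpow_mul (by positivity), one_div_mul_cancel hp0.ne', Real.rpow_one]
  have e2 : (y ^ (1/p:ℝ)) ^ p = y := by
    rw [← Real.rpow_mul hy, one_div_mul_cancel hp0.ne', Real.rpow_one]
  rw [e1, e2] at key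
  have hinner : m/(m+1)*(x/m) + 1/(m+1)*y = (x+y)/(m+1) := by field_simp
  rw [hinner] at key
  have hA : (x/m) ^ (1/p:ℝ) = x ^ (1/p:ℝ) / m ^ (1/p:ℝ) := Real.div_rpow hx hm0.le _
  have hB : ((x+y)/(m+1)) ^ (1/p:ℝ) = (x+y) ^ (1/p:ℝ) / (m+1) ^ (1/p:ℝ) :=
    Real.div_rpow (by positivity) hm1.le _
  rw [hA, hB] at key
  have hmθ : (0:ℝ) < m ^ (1/p:ℝ) := Real.rpow_pos_of_pos hm0 _
  have hm1θ : (0:ℝ) < (m+1) ^ (1/p:ℝ) := Real.rpow_pos_of_pos hm1 _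
  rw [Real.rpow_sub hm0, Real.rpow_sub hm1, Real.rpow_one, Real.rpow_one]
  have := mul_le_mul_of_nonneg_left key hm1.le
  calc m / m ^ (1/p:ℝ) * x ^ (1/p:ℝ) + y ^ (1/p:ℝ)
      = (m+1) * (m/(m+1)*(x ^ (1/p:ℝ) / m ^ (1/p:ℝ)) + 1/(m+1)*y ^ (1/p:ℝ)) := by
        field_simp
    _ ≤ (m+1) * ((x+y) ^ (1/p:ℝ) / (m+1) ^ (1/p:ℝ)) := this
    _ = (m+1) / (m+1) ^ (1/p:ℝ) * (x+y) ^ (1/p:ℝ) := by ring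

private lemma ABpow' {r x : ℝ} (hr : 0 ≤ r) (hx : 0 ≤ x) (p : ℝ) (n : ℕ) :
    (r ^ ((p-1)/p) * x ^ (1/p:ℝ)) ^ n = r ^ ((n:ℝ)*(p-1)/p) * x ^ ((n:ℝ)/p) := by
  rw [mul_pow, ← Real.rpow_natCast (r ^ ((p-1)/p)) n, ← Real.rpow_natCast (x ^ (1/p:ℝ)) n,
    ← Real.rpow_mul hr, ← Real.rpow_mul hx]
  ring_nf

private lemma Bpow' {x : ℝ} (hx : 0 ≤ x) (p : ℝ) (n : ℕ) :
    (x ^ (1/p:ℝ)) ^ n = x ^ ((n:ℝ)/p) := by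
  rw [← Real.rpow_natCast (x ^ (1/p:ℝ)) n, ← Real.rpow_mul hx]
  ring_nf

private lemma two_le_choose' {k i : ℕ} (h1 : 1 ≤ i) (h2 : i < k) : 2 ≤ k.choose i := by
  obtain ⟨i', rfl⟩ := Nat.exists_eq_add_of_le h1
  obtain ⟨k', rfl⟩ : ∃ k', k = k' + 1 := ⟨k - 1, by omega⟩
  rw [Nat.add_comm 1 i', Nat.choose_succ_succ]
  simp only [Nat.succ_eq_add_one]
  have h3 : i' ≤ k' := by omega
  have h4 : i' + 1 ≤ k' := by omega
  have := Nat.choose_pos h3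
  have := Nat.choose_pos h4
  omega

private lemma sum_bound' {k : ℕ} {A B c : ℝ} (hA : 0 ≤ A) (hB : 0 ≤ B) (hc : 0 ≤ c)
    (f : ℕ → ℝ) (h0 : f 0 ≤ c * A ^ k) (hkk : f k ≤ c * B ^ k)
    (hmid : ∀ i, 1 ≤ i → i < k → f i ≤ 2 * c * (A ^ (k - i) * B ^ i)) :
    ∑ i ∈ Finset.range (k+1), f i ≤ c * (A + B) ^ k := by
  have expand : c * (A + B) ^ k
      = ∑ i ∈ Finset.range (k+1), c * (B ^ i * A ^ (k - i) * (k.choose i : ℝ)) := by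
    rw [add_comm A B, add_pow, Finset.mul_sum]
  rw [expand]
  apply Finset.sum_le_sum
  intro i hi
  rw [Finset.mem_range] at hi
  by_cases h0i : i = 0
  · subst h0i; simpa using h0
  by_cases hik : i = k
  · subst hik; simpa using hkk
  · have h1 : 1 ≤ i := by omega
    have h2 : i < k := by omega
    have hC : (2:ℝ) ≤ (k.choose i : ℝ) := by exact_mod_cast two_le_choose' h1 h2
    calc f i ≤ 2 * c * (A ^ (k - i) * B ^ i) := hmid i h1 h2
      _ ≤ (k.choose i : ℝ) * c * (A ^ (k-i) * B ^ i) := by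
          apply mul_le_mul_of_nonneg_right _ (by positivity)
          exact mul_le_mul_of_nonneg_right hC hc
      _ = c * (B ^ i * A ^ (k-i) * (k.choose i:ℝ)) := by ring


set_option maxHeartbeats 1000000 in
/-- Lemma 4.3(ii): local-to-global estimate for the
difference of two multiplicative functionals.  Levels are modelled as
elements of a normed ring `A` (the truncated tensor algebra), with
Chen's identity as hypothesis. -/
theorem stmt_2 {A : Type*} [NormedRing A] (p : ℝ) (hp : 2 ≤ p)
    (ω : ℝ → ℝ → ℝ)
    (hnn : ∀ s t, 0 ≤ s → s ≤ t → t ≤ 1 → 0 ≤ ω s t)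
    (hsuper : ∀ s u t, 0 ≤ s → s ≤ u → u ≤ t → t ≤ 1 → ω s u + ω u t ≤ ω s t)
    (w what : ℕ → ℝ → ℝ → A)
    (hw0 : ∀ s t, w 0 s t = 1) (hwhat0 : ∀ s t, what 0 s t = 1)
    (hchen : ∀ k, k ≤ Nat.floor p → ∀ s u t, 0 ≤ s → s ≤ u → u ≤ t → t ≤ 1 →
      w k s t = ∑ i ∈ Finset.range (k + 1), w (k - i) s u * w i u t)
    (hchen' : ∀ k, k ≤ Nat.floor p → ∀ s u t, 0 ≤ s → s ≤ u → u ≤ t → t ≤ 1 →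
      what k s t = ∑ i ∈ Finset.range (k + 1), what (k - i) s u * what i u t)
    (N : ℕ) (hN : 1 ≤ N) (τ : ℕ → ℝ)
    (hτ0 : τ 0 = 0) (hτN : τ N = 1) (hmono : ∀ j < N, τ j < τ (j + 1))
    (ε : ℝ) (hε : 0 ≤ ε)
    (hloc : ∀ j, 1 ≤ j → j ≤ N → ∀ s t, τ (j - 1) ≤ s → s ≤ t → t ≤ τ j →
      ∀ k, 1 ≤ k → k ≤ Nat.floor p → ‖w k s t‖ ≤ ω s t ^ ((k : ℝ) / p))
    (hloc' : ∀ j, 1 ≤ j → j ≤ N → ∀ s t, τ (j - 1) ≤ s → s ≤ t → t ≤ τ j →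
      ∀ k, 1 ≤ k → k ≤ Nat.floor p → ‖what k s t‖ ≤ ω s t ^ ((k : ℝ) / p))
    (hdiff : ∀ j, 1 ≤ j → j ≤ N → ∀ s t, τ (j - 1) ≤ s → s ≤ t → t ≤ τ j →
      ∀ k, 1 ≤ k → k ≤ Nat.floor p →
        ‖w k s t - what k s t‖ ≤ ε * ω s t ^ ((k : ℝ) / p)) :
    ∀ s t, 0 ≤ s → s ≤ t → t ≤ 1 → ∀ k, 1 ≤ k → k ≤ Nat.floor p →
      ‖w k s t - what k s t‖
        ≤ ε * (N : ℝ) ^ ((k : ℝ) * (p - 1) / p) * ω s t ^ ((k : ℝ) / p) := by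
  have hp0 : (0:ℝ) < p := by linarith
  have hp1 : (1:ℝ) ≤ p := by linarith
  have τmono : ∀ i j, i ≤ j → j ≤ N → τ i ≤ τ j := by
    intro i j hij hjN
    induction j with
    | zero =>
      have : i = 0 := Nat.le_zero.mp hij
      rw [this]
    | succ n ih =>
      rcases Nat.eq_or_lt_of_le hij with h | h
      · rw [h]
      · have h1 := ih (by omega) (by omega)
        have h2 := (hmono n (by omega)).le
        linarith
  have τ0le : ∀ j, j ≤ N → 0 ≤ τ j := by
    intro j hj; rw [← hτ0]; exact τmono 0 j (Nat.zero_le _) hj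
  have τle1 : ∀ j, j ≤ N → τ j ≤ 1 := by
    intro j hj; rw [← hτN]; exact τmono j N hj le_rfl
  have main : ∀ j, 1 ≤ j → j ≤ N → ∀ s t, 0 ≤ s → s ≤ t → t ≤ τ j →
      ∀ k, 1 ≤ k → k ≤ Nat.floor p →
      ‖w k s t‖ ≤ (j:ℝ) ^ ((k:ℝ)*(p-1)/p) * ω s t ^ ((k:ℝ)/p) ∧
      ‖what k s t‖ ≤ (j:ℝ) ^ ((k:ℝ)*(p-1)/p) * ω s t ^ ((k:ℝ)/p) ∧
      ‖w k s t - what k s t‖ ≤ ε * ((j:ℝ) ^ ((k:ℝ)*(p-1)/p) * ω s t ^ ((k:ℝ)/p)) := by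
    intro j hj1
    induction j, hj1 using Nat.le_induction with
    | base =>
      intro hjN s t hs hst ht k hk1 hk2
      have hτ00 : τ (1-1) ≤ s := by
        rw [show (1-1 : ℕ) = 0 from rfl, hτ0]; exact hs
      refine ⟨?_, ?_, ?_⟩
      · simpa [Real.one_rpow] using hloc 1 le_rfl hjN s t hτ00 hst ht k hk1 hk2
      · simpa [Real.one_rpow] using hloc' 1 le_rfl hjN s t hτ00 hst ht k hk1 hk2
      · simpa [Real.one_rpow] using hdiff 1 le_rfl hjN s t hτ00 hst ht k hk1 hk2
    | succ j hj ih =>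
      intro hjN s t hs hst ht k hk1 hk2
      have hjN' : j ≤ N := by omega
      have hkp : (0:ℝ) ≤ (k:ℝ)*(p-1)/p := by
        apply div_nonneg _ hp0.le
        have : (0:ℝ) ≤ (k:ℝ) := Nat.cast_nonneg k
        nlinarith
      have ht1 : t ≤ 1 := le_trans ht (τle1 _ hjN)
      have hωst : 0 ≤ ω s t := hnn s t hs hst ht1
      have hωθ : 0 ≤ ω s t ^ ((k:ℝ)/p) := Real.rpow_nonneg hωst _
      by_cases hcase1 : t ≤ τ j
      · obtain ⟨H1, H2, H3⟩ := ih hjN' s t hs hst hcase1 k hk1 hk2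
        have hmonoj : ((j:ℝ)) ^ ((k:ℝ)*(p-1)/p) ≤ ((j+1:ℕ):ℝ) ^ ((k:ℝ)*(p-1)/p) := by
          apply Real.rpow_le_rpow (Nat.cast_nonneg j) (by push_cast; linarith) hkp
        refine ⟨le_trans H1 ?_, le_trans H2 ?_, le_trans H3 ?_⟩
        · exact mul_le_mul_of_nonneg_right hmonoj hωθ
        · exact mul_le_mul_of_nonneg_right hmonoj hωθ
        · exact mul_le_mul_of_nonneg_left (mul_le_mul_of_nonneg_right hmonoj hωθ) hε
      push_neg at hcase1
      by_cases hcase2 : τ j ≤ s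
      · have hτj : τ ((j+1) - 1) ≤ s := by simpa using hcase2
        have one_le : (1:ℝ) ≤ ((j+1:ℕ):ℝ) ^ ((k:ℝ)*(p-1)/p) :=
          Real.one_le_rpow (by push_cast; linarith) hkp
        refine ⟨le_trans (hloc (j+1) (by omega) hjN s t hτj hst ht k hk1 hk2)
            (le_mul_of_one_le_left hωθ one_le),
          le_trans (hloc' (j+1) (by omega) hjN s t hτj hst ht k hk1 hk2)
            (le_mul_of_one_le_left hωθ one_le),
          le_trans (hdiff (j+1) (by omega) hjN s t hτj hst ht k hk1 hk2)
            (mul_le_mul_of_nonneg_left (le_mul_of_one_le_left hωθ one_le) hε)⟩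
      push_neg at hcase2
      -- the genuine splitting case: s < τ j < t ≤ τ (j+1)
      set u := τ j with hu
      have h0u : 0 ≤ u := τ0le j hjN'
      have hsu : s ≤ u := hcase2.le
      have hut : u ≤ t := hcase1.le
      have hu1 : u ≤ 1 := τle1 j hjN'
      have hx0 : 0 ≤ ω s u := hnn s u hs hsu hu1
      have hy0 : 0 ≤ ω u t := hnn u t h0u hut ht1
      have hxy : ω s u + ω u t ≤ ω s t := hsuper s u t hs hsu hut ht1
      have hj0R : (0:ℝ) ≤ (j:ℝ) := Nat.cast_nonneg j
      have hj1R : (1:ℝ) ≤ (j:ℝ) := by exact_mod_cast hj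
      set Av := ((j:ℝ)) ^ ((p-1)/p) * (ω s u) ^ (1/p:ℝ) with hAv
      set Bv := (ω u t) ^ (1/p:ℝ) with hBv
      have hA0 : 0 ≤ Av := by
        apply mul_nonneg (Real.rpow_nonneg hj0R _) (Real.rpow_nonneg hx0 _)
      have hB0 : 0 ≤ Bv := Real.rpow_nonneg hy0 _
      have hex : (p-1)/p = 1 - 1/p := by field_simp
      have hAB : Av + Bv ≤ ((j:ℝ)+1) ^ ((p-1)/p) * (ω s u + ω u t) ^ (1/p:ℝ) := by
        rw [hAv, hBv, hex]
        exact jensen2' hp1 hj1R hx0 hy0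
      -- global bound for the concatenation constant
      have hfin : (Av+Bv)^k ≤ ((j+1:ℕ):ℝ) ^ ((k:ℝ)*(p-1)/p) * ω s t ^ ((k:ℝ)/p) := by
        calc (Av+Bv)^k ≤ (((j:ℝ)+1) ^ ((p-1)/p) * (ω s u + ω u t) ^ (1/p:ℝ))^k := by
              exact pow_le_pow_left₀ (by linarith) hAB k
          _ = ((j:ℝ)+1) ^ ((k:ℝ)*(p-1)/p) * (ω s u + ω u t) ^ ((k:ℝ)/p) :=
              ABpow' (by linarith) (by linarith) p k
          _ ≤ ((j:ℝ)+1) ^ ((k:ℝ)*(p-1)/p) * ω s t ^ ((k:ℝ)/p) := by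
              apply mul_le_mul_of_nonneg_left
                (Real.rpow_le_rpow (by linarith) hxy (by positivity))
                (Real.rpow_nonneg (by linarith) _)
          _ = ((j+1:ℕ):ℝ) ^ ((k:ℝ)*(p-1)/p) * ω s t ^ ((k:ℝ)/p) := by push_cast; ring_nf
      -- level bounds on [s,u] coming from the inductive hypothesis, in power form
      have ihW : ∀ n, 1 ≤ n → n ≤ Nat.floor p → ‖w n s u‖ ≤ Av ^ n := by
        intro n h1 h2
        rw [ABpow' hj0R hx0 p n]
        exact (ih hjN' s u hs hsu le_rfl n h1 h2).1
      have ihWhat : ∀ n, 1 ≤ n → n ≤ Nat.floor p → ‖what n s u‖ ≤ Av ^ n := by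
        intro n h1 h2
        rw [ABpow' hj0R hx0 p n]
        exact (ih hjN' s u hs hsu le_rfl n h1 h2).2.1
      have ihD : ∀ n, 1 ≤ n → n ≤ Nat.floor p → ‖w n s u - what n s u‖ ≤ ε * Av ^ n := by
        intro n h1 h2
        rw [ABpow' hj0R hx0 p n]
        exact (ih hjN' s u hs hsu le_rfl n h1 h2).2.2
      have hτj : τ ((j+1) - 1) ≤ u := by simp [hu]
      have locW : ∀ n, 1 ≤ n → n ≤ Nat.floor p → ‖w n u t‖ ≤ Bv ^ n := by
        intro n h1 h2
        rw [hBv, Bpow' hy0 p n]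
        exact hloc (j+1) (by omega) hjN u t hτj hut ht n h1 h2
      have locWhat : ∀ n, 1 ≤ n → n ≤ Nat.floor p → ‖what n u t‖ ≤ Bv ^ n := by
        intro n h1 h2
        rw [hBv, Bpow' hy0 p n]
        exact hloc' (j+1) (by omega) hjN u t hτj hut ht n h1 h2
      have locD : ∀ n, 1 ≤ n → n ≤ Nat.floor p → ‖w n u t - what n u t‖ ≤ ε * Bv ^ n := by
        intro n h1 h2
        rw [hBv, Bpow' hy0 p n]
        exact hdiff (j+1) (by omega) hjN u t hτj hut ht n h1 h2
      have hchenk := hchen k hk2 s u t hs hsu hut ht1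
      have hchenk' := hchen' k hk2 s u t hs hsu hut ht1
      refine ⟨?_, ?_, ?_⟩
      · -- bound for w
        have S1 : ∑ i ∈ Finset.range (k+1), ‖w (k-i) s u * w i u t‖ ≤ 1 * (Av+Bv)^k := by
          apply sum_bound' hA0 hB0 zero_le_one
          · simpa [hw0] using ihW k hk1 hk2
          · simpa [hw0] using locW k hk1 hk2
          · intro i h1 h2
            calc ‖w (k-i) s u * w i u t‖ ≤ ‖w (k-i) s u‖ * ‖w i u t‖ := norm_mul_le _ _
              _ ≤ Av ^ (k-i) * Bv ^ i := by
                  apply mul_le_mul (ihW (k-i) (by omega) (le_trans (Nat.sub_le k i) hk2))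
                    (locW i h1 (by omega)) (norm_nonneg _) (pow_nonneg hA0 _)
              _ ≤ 2 * 1 * (Av ^ (k-i) * Bv ^ i) := by
                  nlinarith [pow_nonneg hA0 (k-i), pow_nonneg hB0 i,
                    mul_nonneg (pow_nonneg hA0 (k-i)) (pow_nonneg hB0 i)]
        calc ‖w k s t‖ = ‖∑ i ∈ Finset.range (k+1), w (k-i) s u * w i u t‖ := by rw [hchenk]
          _ ≤ ∑ i ∈ Finset.range (k+1), ‖w (k-i) s u * w i u t‖ := norm_sum_le _ _
          _ ≤ 1 * (Av+Bv)^k := S1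
          _ = (Av+Bv)^k := one_mul _
          _ ≤ _ := hfin
      · -- bound for what
        have S2 : ∑ i ∈ Finset.range (k+1), ‖what (k-i) s u * what i u t‖ ≤ 1 * (Av+Bv)^k := by
          apply sum_bound' hA0 hB0 zero_le_one
          · simpa [hwhat0] using ihWhat k hk1 hk2
          · simpa [hwhat0] using locWhat k hk1 hk2
          · intro i h1 h2
            calc ‖what (k-i) s u * what i u t‖ ≤ ‖what (k-i) s u‖ * ‖what i u t‖ :=
                  norm_mul_le _ _
              _ ≤ Av ^ (k-i) * Bv ^ i := by
                  apply mul_le_mul (ihWhat (k-i) (by omega) (le_trans (Nat.sub_le k i) hk2))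
                    (locWhat i h1 (by omega)) (norm_nonneg _) (pow_nonneg hA0 _)
              _ ≤ 2 * 1 * (Av ^ (k-i) * Bv ^ i) := by
                  nlinarith [mul_nonneg (pow_nonneg hA0 (k-i)) (pow_nonneg hB0 i)]
        calc ‖what k s t‖ = ‖∑ i ∈ Finset.range (k+1), what (k-i) s u * what i u t‖ := by
              rw [hchenk']
          _ ≤ ∑ i ∈ Finset.range (k+1), ‖what (k-i) s u * what i u t‖ := norm_sum_le _ _
          _ ≤ 1 * (Av+Bv)^k := S2
          _ = (Av+Bv)^k := one_mul _
          _ ≤ _ := hfin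
      · -- bound for the difference
        have S3 : ∑ i ∈ Finset.range (k+1),
            ‖w (k-i) s u * w i u t - what (k-i) s u * what i u t‖ ≤ ε * (Av+Bv)^k := by
          apply sum_bound' hA0 hB0 hε
          · simpa [hw0, hwhat0] using ihD k hk1 hk2
          · simpa [hw0, hwhat0] using locD k hk1 hk2
          · intro i h1 h2
            have hdec : w (k-i) s u * w i u t - what (k-i) s u * what i u t
                = (w (k-i) s u - what (k-i) s u) * w i u t
                  + what (k-i) s u * (w i u t - what i u t) := by noncomm_ring
            have b1 := ihD (k-i) (by omega) (le_trans (Nat.sub_le k i) hk2)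
            have b2 := locW i h1 (by omega)
            have b3 := ihWhat (k-i) (by omega) (le_trans (Nat.sub_le k i) hk2)
            have b4 := locD i h1 (by omega)
            calc ‖w (k-i) s u * w i u t - what (k-i) s u * what i u t‖
                ≤ ‖(w (k-i) s u - what (k-i) s u) * w i u t‖
                  + ‖what (k-i) s u * (w i u t - what i u t)‖ := by
                  rw [hdec]; exact norm_add_le _ _
              _ ≤ ‖w (k-i) s u - what (k-i) s u‖ * ‖w i u t‖
                  + ‖what (k-i) s u‖ * ‖w i u t - what i u t‖ :=
                  add_le_add (norm_mul_le _ _) (norm_mul_le _ _)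
              _ ≤ (ε * Av ^ (k-i)) * Bv ^ i + Av ^ (k-i) * (ε * Bv ^ i) :=
                  add_le_add
                    (mul_le_mul b1 b2 (norm_nonneg _) (by positivity))
                    (mul_le_mul b3 b4 (norm_nonneg _) (pow_nonneg hA0 _))
              _ = 2 * ε * (Av ^ (k-i) * Bv ^ i) := by ring
        calc ‖w k s t - what k s t‖
            = ‖∑ i ∈ Finset.range (k+1),
                (w (k-i) s u * w i u t - what (k-i) s u * what i u t)‖ := by
              rw [hchenk, hchenk', ← Finset.sum_sub_distrib]
          _ ≤ ∑ i ∈ Finset.range (k+1),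
                ‖w (k-i) s u * w i u t - what (k-i) s u * what i u t‖ := norm_sum_le _ _
          _ ≤ ε * (Av+Bv)^k := S3
          _ ≤ ε * (((j+1:ℕ):ℝ) ^ ((k:ℝ)*(p-1)/p) * ω s t ^ ((k:ℝ)/p)) :=
              mul_le_mul_of_nonneg_left hfin hε
  intro s t hs hst ht k hk1 hk2
  have := (main N hN le_rfl s t hs hst (by rw [hτN]; exact ht) k hk1 hk2).2.2
  rw [mul_assoc]
  exact this
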